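/- arXiv:1708.05059 — 4 statements merged into one kernel-verified Lean document; each statement's English description precedes it below -/
import Mathlib

section
/- Let g be a 2n-dimensional real nilpotent Lie algebra with a complex structure J. If g_k ∩ J(g_k) = {0} for some integer k ≥ 1 (where g_k is the k-th term of the ascending central series), then g_{k+1} ∩ J(g_k) = {0}. -/
/-- The ascending central series of a Lie algebra:
`acs g 0 = 0`, `acs g (k+1) = {X | [X,g] ⊆ acs g k}`. -/
def acs (g : Type*) [LieRing g] [LieAlgebra ℝ g] : ℕ → Submodule ℝ g
  | 0 => ⊥
  | k + 1 =>
    { carrier := {X : g | ∀ Y : g, ⁅X, Y⁆ ∈ acs g k}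
      zero_mem' := by intro Y; simp
      add_mem' := by
        intro a b ha hb Y
        rw [add_lie]; exact (acs g k).add_mem (ha Y) (hb Y)
      smul_mem' := by
        intro c x hx Y
        rw [smul_lie]; exact (acs g k).smul_mem c (hx Y) }

/-!
Write `X = J Y` with `X ∈ g_{k+1}` and `Y ∈ g_k`, so that `J X = -Y ∈ g_k`. For every `Z` the
vector `w = [X, JZ] + [JX, Z]` lies in `g_k`, and the vanishing of the Nijenhuis tensor gives
`J w = [JX, JZ] - [X, Z] ∈ g_k`; hence `J w ∈ g_k ∩ J(g_k) = 0` and `w = 0`. Thus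
`[X, W] = [JX, JW] ∈ g_{k-1}` for all `W`, i.e. `X ∈ g_k ∩ J(g_k) = 0`.
-/

section AscendingCentralSeries

variable {g : Type*} [LieRing g] [LieAlgebra ℝ g]

lemma acs_le_acs_succ (k : ℕ) : acs g k ≤ acs g (k + 1) := by
  induction k with
  | zero => exact bot_le
  | succ k ih => exact fun X hX Y => ih (hX Y)

lemma lie_mem_acs {X : g} {k : ℕ} (hX : X ∈ acs g k) (Y : g) : ⁅X, Y⁆ ∈ acs g k := by
  cases k with
  | zero =>
    rw [(Submodule.mem_bot ℝ).mp hX, zero_lie]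
    exact zero_mem _
  | succ k => exact acs_le_acs_succ k (hX Y)

end AscendingCentralSeries

section ComplexStructure

variable {g : Type*} [LieRing g] [LieAlgebra ℝ g] {J : g →ₗ[ℝ] g}

lemma injective_of_map_map_eq_neg (hJ2 : ∀ X : g, J (J X) = -X) : Function.Injective J :=
  fun X Y hXY => neg_injective (by rw [← hJ2 X, ← hJ2 Y, hXY])

lemma map_lie_add_lie_eq_sub
    (hN : ∀ X Y : g, ⁅X, Y⁆ + J ⁅J X, Y⁆ + J ⁅X, J Y⁆ - ⁅J X, J Y⁆ = 0) (X Y : g) :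
    J (⁅X, J Y⁆ + ⁅J X, Y⁆) = ⁅J X, J Y⁆ - ⁅X, Y⁆ := by
  rw [map_add, ← sub_eq_zero, ← hN X Y]
  abel

lemma lie_map_eq_neg_map_lie (hJ2 : ∀ X : g, J (J X) = -X)
    (hN : ∀ X Y : g, ⁅X, Y⁆ + J ⁅J X, Y⁆ + J ⁅X, J Y⁆ - ⁅J X, J Y⁆ = 0)
    {k : ℕ} (h : acs g k ⊓ (acs g k).map J = ⊥) {X : g}
    (hX : X ∈ acs g (k + 1)) (hJX : J X ∈ acs g k) (Z : g) :
    ⁅X, J Z⁆ = -⁅J X, Z⁆ := by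
  have hw : ⁅X, J Z⁆ + ⁅J X, Z⁆ ∈ acs g k := add_mem (hX (J Z)) (lie_mem_acs hJX Z)
  have hJw : J (⁅X, J Z⁆ + ⁅J X, Z⁆) ∈ acs g k := by
    rw [map_lie_add_lie_eq_sub hN]
    exact sub_mem (lie_mem_acs hJX (J Z)) (hX Z)
  have hw_zero : ⁅X, J Z⁆ + ⁅J X, Z⁆ = 0 := by
    apply injective_of_map_map_eq_neg hJ2
    rw [map_zero, ← Submodule.mem_bot ℝ, ← h]
    exact ⟨hJw, _, hw, rfl⟩
  exact eq_neg_of_add_eq_zero_left hw_zero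

lemma mem_acs_of_map_mem_acs (hJ2 : ∀ X : g, J (J X) = -X)
    (hN : ∀ X Y : g, ⁅X, Y⁆ + J ⁅J X, Y⁆ + J ⁅X, J Y⁆ - ⁅J X, J Y⁆ = 0)
    {k : ℕ} (h : acs g (k + 1) ⊓ (acs g (k + 1)).map J = ⊥) {X : g}
    (hX : X ∈ acs g (k + 2)) (hJX : J X ∈ acs g (k + 1)) : X ∈ acs g (k + 1) := by
  intro W
  have hXW := lie_map_eq_neg_map_lie hJ2 hN h hX hJX (J W)
  rw [hJ2, lie_neg, neg_inj] at hXW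
  rw [hXW]
  exact hJX (J W)

end ComplexStructure

theorem acs_succ_inf_J_acs_eq_bot_general (g : Type*) [LieRing g] [LieAlgebra ℝ g]
    (J : g →ₗ[ℝ] g) (hJ2 : ∀ X : g, J (J X) = -X)
    (hN : ∀ X Y : g, ⁅X, Y⁆ + J ⁅J X, Y⁆ + J ⁅X, J Y⁆ - ⁅J X, J Y⁆ = 0)
    (k : ℕ)
    (h : acs g k ⊓ (acs g k).map J = ⊥) :
    acs g (k + 1) ⊓ (acs g k).map J = ⊥ := by
  cases k with
  | zero => rw [show acs g 0 = ⊥ from rfl, Submodule.map_bot, inf_bot_eq]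
  | succ k =>
    rw [eq_bot_iff]
    rintro _ ⟨hX, Y, hY, rfl⟩
    have hJJY : J (J Y) ∈ acs g (k + 1) := by
      rw [hJ2]
      exact neg_mem hY
    rw [← h]
    exact ⟨mem_acs_of_map_mem_acs hJ2 hN h hX hJJY, Y, hY, rfl⟩

/-- if `g_k ∩ J(g_k) = 0` for some `k ≥ 1`, then
`g_{k+1} ∩ J(g_k) = 0`. -/
theorem acs_succ_inf_J_acs_eq_bot (g : Type*) [LieRing g] [LieAlgebra ℝ g]
    [FiniteDimensional ℝ g] (n : ℕ) (hdim : Module.finrank ℝ g = 2 * n)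
    (hnil : ∃ s : ℕ, acs g s = ⊤)
    (J : g →ₗ[ℝ] g) (hJ2 : ∀ X : g, J (J X) = -X)
    (hN : ∀ X Y : g, ⁅X, Y⁆ + J ⁅J X, Y⁆ + J ⁅X, J Y⁆ - ⁅J X, J Y⁆ = 0)
    (k : ℕ) (hk : 1 ≤ k)
    (h : acs g k ⊓ (acs g k).map J = ⊥) :
    acs g (k + 1) ⊓ (acs g k).map J = ⊥ :=
  acs_succ_inf_J_acs_eq_bot_general g J hJ2 hN k h
end

section
/- Let g be a 2n-dimensional real nilpotent Lie algebra with a complex structure J. Suppose there exists a subspace W ⊆ g_k for some k > 1 with dim W = n and W ∩ J(W) = {0}. If g_{k-1} is J-invariant (J(g_{k-1}) = g_{k-1}), then g_k = g. -/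
theorem Submodule.sup_map_eq_top_of_inf_map_eq_bot {K V : Type*} [DivisionRing K]
    [AddCommGroup V] [Module K V] [FiniteDimensional K V] {n : ℕ}
    (hdim : Module.finrank K V = 2 * n)
    {f : V →ₗ[K] V} (hf : Function.Injective f) {W : Submodule K V}
    (hWdim : Module.finrank K W = n) (hWf : W ⊓ W.map f = ⊥) :
    W ⊔ W.map f = ⊤ := by
  have hfW : Module.finrank K (W.map f) = n :=
    (W.equivMapOfInjective f hf).finrank_eq.symm.trans hWdim
  apply Submodule.eq_top_of_finrank_eq
  have h := Submodule.finrank_sup_add_finrank_inf_eq W (W.map f)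
  rw [hWf, finrank_bot, add_zero, hWdim, hfW] at h
  omega

section AscendingCentralSeries

variable {g : Type*} [LieRing g] [LieAlgebra ℝ g]

theorem mem_acs_succ {m : ℕ} {X : g} :
    X ∈ acs g (m + 1) ↔ ∀ Y : g, ⁅X, Y⁆ ∈ acs g m := Iff.rfl

theorem lie_mem_acs_of_mem_acs_succ {m : ℕ} {X : g} (hX : X ∈ acs g (m + 1)) (Y : g) :
    ⁅Y, X⁆ ∈ acs g m := by
  rw [← lie_skew]
  exact (acs g m).neg_mem (mem_acs_succ.mp hX Y)

variable {J : g →ₗ[ℝ] g}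
  (hN : ∀ X Y : g, ⁅X, Y⁆ + J ⁅J X, Y⁆ + J ⁅X, J Y⁆ - ⁅J X, J Y⁆ = 0)
  {m : ℕ} (hJm : (acs g m).map J ≤ acs g m)
include hN hJm

theorem lie_map_mem_acs {x y : g} (hx : x ∈ acs g (m + 1)) (hy : y ∈ acs g (m + 1)) :
    ⁅J x, J y⁆ ∈ acs g m := by
  have hJ : ∀ z ∈ acs g m, J z ∈ acs g m := fun z hz ↦ hJm ⟨z, hz, rfl⟩
  rw [← sub_eq_zero.mp (hN x y)]
  exact add_mem (add_mem (mem_acs_succ.mp hx y) (hJ _ (lie_mem_acs_of_mem_acs_succ hy _)))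
    (hJ _ (mem_acs_succ.mp hx _))

theorem acs_succ_eq_top_of_sup_map_eq_top {W : Submodule ℝ g} (hW : W ≤ acs g (m + 1))
    (htop : W ⊔ W.map J = ⊤) : acs g (m + 1) = ⊤ := by
  have hJW : W.map J ≤ acs g (m + 1) := by
    rintro _ ⟨x, hx, rfl⟩
    refine mem_acs_succ.mpr fun Y ↦ ?_
    obtain ⟨a, ha, _, ⟨b, hb, rfl⟩, rfl⟩ :=
      Submodule.mem_sup.mp (htop ▸ Submodule.mem_top : Y ∈ W ⊔ W.map J)
    rw [lie_add]
    exact add_mem (lie_mem_acs_of_mem_acs_succ (hW ha) _)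
      (lie_map_mem_acs hN hJm (hW hx) (hW hb))
  rw [eq_top_iff, ← htop]
  exact sup_le hW hJW

end AscendingCentralSeries

theorem acs_eq_top_of_J_invariant_pred_general (g : Type*) [LieRing g] [LieAlgebra ℝ g]
    [FiniteDimensional ℝ g] (n : ℕ) (hdim : Module.finrank ℝ g = 2 * n)
    (J : g →ₗ[ℝ] g) (hJ2 : ∀ X : g, J (J X) = -X)
    (hN : ∀ X Y : g, ⁅X, Y⁆ + J ⁅J X, Y⁆ + J ⁅X, J Y⁆ - ⁅J X, J Y⁆ = 0)
    (k : ℕ) (hk : 1 < k)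
    (W : Submodule ℝ g) (hW : W ≤ acs g k)
    (hWdim : Module.finrank ℝ W = n) (hWJ : W ⊓ W.map J = ⊥)
    (hinv : (acs g (k - 1)).map J = acs g (k - 1)) :
    acs g k = ⊤ := by
  obtain ⟨m, rfl⟩ : ∃ m, k = m + 1 := ⟨k - 1, by omega⟩
  have hJinj : Function.Injective J := fun x y hxy ↦ by
    simpa [hJ2] using congrArg J hxy
  exact acs_succ_eq_top_of_sup_map_eq_top hN (Nat.add_sub_cancel m 1 ▸ hinv).le hW
    (Submodule.sup_map_eq_top_of_inf_map_eq_bot hdim hJinj hWdim hWJ)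

/-- if `W ⊆ g_k` with `k > 1`, `dim W = n`, `W ∩ J(W) = 0`, and
`g_{k-1}` is `J`-invariant, then `g_k = g`. -/
theorem acs_eq_top_of_J_invariant_pred (g : Type*) [LieRing g] [LieAlgebra ℝ g]
    [FiniteDimensional ℝ g] (n : ℕ) (hdim : Module.finrank ℝ g = 2 * n)
    (hnil : ∃ s : ℕ, acs g s = ⊤)
    (J : g →ₗ[ℝ] g) (hJ2 : ∀ X : g, J (J X) = -X)
    (hN : ∀ X Y : g, ⁅X, Y⁆ + J ⁅J X, Y⁆ + J ⁅X, J Y⁆ - ⁅J X, J Y⁆ = 0)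
    (k : ℕ) (hk : 1 < k)
    (W : Submodule ℝ g) (hW : W ≤ acs g k)
    (hWdim : Module.finrank ℝ W = n) (hWJ : W ⊓ W.map J = ⊥)
    (hinv : (acs g (k - 1)).map J = acs g (k - 1)) :
    acs g k = ⊤ :=
  acs_eq_top_of_J_invariant_pred_general g n hdim J hJ2 hN k hk W hW hWdim hWJ hinv
end

section
/- The 8-dimensional real nilpotent Lie algebra g = h × ℝ, where h is the 7-dimensional nilpotent Lie algebra with basis X₁,...,X₇ and nonzero brackets [X₁,X₂] = X₃, [X₁,X₃] = X₄, [X₁,X₄] = X₅, [X₂,X₃] = X₆, [X₁,X₅] = [X₂,X₆] = X₇, does not admit any complex structure. -/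
/-!
Let `V = span {e 2, …, e 7}`, an abelian ideal of codimension two containing `⁅g, g⁆`. The subspace
`V ⊓ J V` is `J`-invariant, hence even-dimensional, so either `J V = V` or `V ⊔ J V = g`.

Integrability of `J` says that `T_x = ad x - ad (J x) ∘ J` commutes with `J`. If `c, J c ∈ V`, the
only triple bracket that survives on `V` is `ad (e 0) ^ 3 (e 2) = e 6`, which gives
`T_x³ c = Re (α³ γ) • e 6` with `α = x₀ + i (J x)₀` and `γ = c₂ + i (J c)₂`. Since `J` has no real
eigenvector, `J (T_x³ c) = T_x³ (J c)` forces `α³ γ = 0`; for `x = e 0` this means `c₂ = 0`.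
This is contradicted by `c = e 2` when `J V = V`, and by `c = ⁅ξ, η⁆` when `V ⊔ J V = g`, where
`ξ ≡ e 0` and `η ≡ e 1` modulo `V` are chosen with `J ξ, J η ∈ V`.
-/

open Module

section ComplexStructure

variable {E : Type*} [AddCommGroup E] [Module ℝ E] {J : E →ₗ[ℝ] E}

theorem even_finrank_of_apply_apply_eq_neg [FiniteDimensional ℝ E] (hJ : ∀ x, J (J x) = -x) :
    Even (finrank ℝ E) := by
  have hdet : LinearMap.det J * LinearMap.det J = (-1) ^ finrank ℝ E := by
    rw [← LinearMap.det_comp, show J ∘ₗ J = (-1 : ℝ) • LinearMap.id from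
      LinearMap.ext fun x => by simp [hJ], LinearMap.det_smul, LinearMap.det_id, mul_one]
  rcases Nat.even_or_odd (finrank ℝ E) with h | h
  · exact h
  · rw [h.neg_one_pow] at hdet
    nlinarith [mul_self_nonneg (LinearMap.det J)]

theorem Submodule.even_finrank_of_forall_apply_mem [FiniteDimensional ℝ E]
    (hJ : ∀ x, J (J x) = -x) (S : Submodule ℝ E) (hS : ∀ x ∈ S, J x ∈ S) :
    Even (finrank ℝ S) :=
  even_finrank_of_apply_apply_eq_neg (J := J.restrict hS) fun x => Subtype.ext (hJ x)

theorem Submodule.map_le_or_sup_map_eq_top [FiniteDimensional ℝ E] (hJ : ∀ x, J (J x) = -x)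
    {U : Submodule ℝ E} (hU : finrank ℝ U + 2 = finrank ℝ E) :
    U.map J ≤ U ∨ U ⊔ U.map J = ⊤ := by
  have hinj : Function.Injective J := fun x y h => by simpa [hJ] using congrArg J h
  have hmap : finrank ℝ (U.map J) = finrank ℝ U :=
    (LinearEquiv.finrank_eq (U.equivMapOfInjective J hinj)).symm
  have hinf : Even (finrank ℝ ↥(U ⊓ U.map J)) := by
    refine Submodule.even_finrank_of_forall_apply_mem hJ _ fun x hx => ⟨?_, x, hx.1, rfl⟩
    obtain ⟨u, hu, rfl⟩ := hx.2
    simpa [hJ] using hu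
  have hsum := Submodule.finrank_sup_add_finrank_inf_eq U (U.map J)
  have hle := Submodule.finrank_mono (le_sup_left : U ≤ U ⊔ U.map J)
  have hge := Submodule.finrank_le (U ⊔ U.map J)
  obtain ⟨k, hk⟩ := hinf
  obtain ⟨n, hn⟩ := even_finrank_of_apply_apply_eq_neg hJ
  rcases (by omega : finrank ℝ ↥(U ⊔ U.map J) = finrank ℝ U ∨
      finrank ℝ ↥(U ⊔ U.map J) = finrank ℝ E) with h | h
  · exact Or.inl (sup_eq_left.mp (Submodule.eq_of_le_of_finrank_eq le_sup_left h.symm).symm)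
  · exact Or.inr (Submodule.eq_top_of_finrank_eq h)

theorem Submodule.exists_sub_mem_and_apply_mem (hJ : ∀ x, J (J x) = -x)
    {U : Submodule ℝ E} (hU : U ⊔ U.map J = ⊤) (x : E) : ∃ ξ, x - ξ ∈ U ∧ J ξ ∈ U := by
  obtain ⟨y, hy, _, ⟨w, hw, rfl⟩, hyw⟩ :=
    Submodule.mem_sup.mp (hU ▸ Submodule.mem_top : x ∈ U ⊔ U.map J)
  refine ⟨J w, ?_, ?_⟩
  · rwa [← hyw, add_sub_cancel_right]
  · rw [hJ]
    exact U.neg_mem hw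

theorem sq_add_sq_eq_zero_of_apply_smul_eq (hJ : ∀ x, J (J x) = -x) {v : E} (hv : v ≠ 0)
    {a b : ℝ} (h : J (a • v) = b • v) : a ^ 2 + b ^ 2 = 0 := by
  have h' : J (b • v) = -(a • v) := by rw [← h, hJ]
  have : (a ^ 2 + b ^ 2) • v = 0 := by
    rw [map_smul] at h h'
    linear_combination (norm := module) a • h' - b • h
  exact (smul_eq_zero.mp this).resolve_right hv

end ComplexStructure

section Nijenhuis

variable {g : Type*} [LieRing g] [LieAlgebra ℝ g]

def NijenhuisVanishes (J : g →ₗ[ℝ] g) : Prop :=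
  ∀ X Y : g, ⁅X, Y⁆ + J ⁅J X, Y⁆ + J ⁅X, J Y⁆ - ⁅J X, J Y⁆ = 0

/-- The real form of `ad (x + i J x)` acting on `g^{0,1} = {c + i J c}`. -/
def twistedAd (J : g →ₗ[ℝ] g) (x c : g) : g := ⁅x, c⁆ - ⁅J x, J c⁆

variable {J : g →ₗ[ℝ] g}

/-- Integrability in the form "`g^{0,1}` is a subalgebra". -/
theorem apply_twistedAd (hJ : ∀ X, J (J X) = -X) (hN : NijenhuisVanishes J) (x c : g) :
    J (twistedAd J x c) = twistedAd J x (J c) := by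
  have h := congrArg J (hN x c)
  simp only [twistedAd, map_add, map_sub, hJ, map_zero, lie_neg] at h ⊢
  linear_combination (norm := abel) h

end Nijenhuis

namespace Dim8NoComplexStructure

variable {g : Type*} [LieRing g] [LieAlgebra ℝ g] (e : Basis (Fin 8) ℝ g)

noncomputable def bracketTable (i j : Fin 8) : g :=
  if i = 0 ∧ j = 1 then e 2
  else if i = 0 ∧ j = 2 then e 3
  else if i = 0 ∧ j = 3 then e 4
  else if i = 1 ∧ j = 2 then e 5
  else if i = 0 ∧ j = 4 then e 6
  else if i = 1 ∧ j = 5 then e 6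
  else 0

def HasStructureConstants : Prop := ∀ i j : Fin 8, i < j → ⁅e i, e j⁆ = bracketTable e i j

def lieCoords (x y : Fin 8 → ℝ) : Fin 8 → ℝ :=
  ![0, 0, x 0 * y 1 - x 1 * y 0, x 0 * y 2 - x 2 * y 0, x 0 * y 3 - x 3 * y 0,
    x 1 * y 2 - x 2 * y 1, x 0 * y 4 - x 4 * y 0 + (x 1 * y 5 - x 5 * y 1), 0]

/-- `span {e 2, …, e 7}`. -/
noncomputable def abelianIdeal : Submodule ℝ g :=
  LinearMap.ker (LinearMap.pi ![e.coord 0, e.coord 1])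

variable {e}

theorem mem_abelianIdeal {v : g} : v ∈ abelianIdeal e ↔ e.repr v 0 = 0 ∧ e.repr v 1 = 0 := by
  simp [abelianIdeal, funext_iff, Fin.forall_fin_two]

variable (e) in
theorem finrank_abelianIdeal : finrank ℝ (abelianIdeal e) + 2 = finrank ℝ g := by
  have hsurj : Function.Surjective (LinearMap.pi ![e.coord 0, e.coord 1]) := fun w =>
    ⟨w 0 • e 0 + w 1 • e 1, funext fun i => by fin_cases i <;> simp⟩
  have := e.finiteDimensional_of_finite
  rw [← LinearMap.finrank_range_add_finrank_ker (LinearMap.pi ![e.coord 0, e.coord 1]),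
    LinearMap.range_eq_top.mpr hsurj, finrank_top, abelianIdeal]
  simp [add_comm]

theorem bracketTable_eq_zero {i j : Fin 8} (h : j ≤ i) : bracketTable e i j = 0 := by
  unfold bracketTable
  split_ifs <;>
    first
    | rfl
    | obtain ⟨rfl, rfl⟩ := ‹_ ∧ _›; exact absurd h (by decide)

theorem lie_basis (hbr : HasStructureConstants e) (i j : Fin 8) :
    ⁅e i, e j⁆ = bracketTable e i j - bracketTable e j i := by
  rcases lt_trichotomy i j with h | rfl | h
  · rw [hbr i j h, bracketTable_eq_zero h.le, sub_zero]
  · rw [sub_self, lie_self]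
  · rw [bracketTable_eq_zero h.le, zero_sub, ← lie_skew, hbr j i h]

theorem repr_lie (hbr : HasStructureConstants e) (x y : g) (k : Fin 8) :
    e.repr ⁅x, y⁆ k = lieCoords (e.repr x) (e.repr y) k := by
  have : ⁅x, y⁆ = ∑ k, lieCoords (e.repr x) (e.repr y) k • e k := by
    conv_lhs => rw [← e.sum_repr x, ← e.sum_repr y]
    simp only [Fin.sum_univ_eight, add_lie, lie_add, smul_lie, lie_smul, lie_basis hbr,
      bracketTable, Fin.reduceEq, reduceIte, and_self, and_true, and_false]
    simp only [lieCoords, Matrix.cons_val]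
    module
  rw [this, e.repr_sum_self]

theorem lie_mem_abelianIdeal (hbr : HasStructureConstants e) (x y : g) :
    ⁅x, y⁆ ∈ abelianIdeal e := by
  simp [mem_abelianIdeal, repr_lie hbr, lieCoords]

theorem lie_eq_zero_of_mem (hbr : HasStructureConstants e) {v w : g} (hv : v ∈ abelianIdeal e)
    (hw : w ∈ abelianIdeal e) : ⁅v, w⁆ = 0 := by
  rw [mem_abelianIdeal] at hv hw
  refine e.ext_elem fun k => ?_
  fin_cases k <;> simp [repr_lie hbr, lieCoords, hv, hw]

theorem repr_lie_two (hbr : HasStructureConstants e) (x y : g) :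
    e.repr ⁅x, y⁆ 2 = e.repr x 0 * e.repr y 1 - e.repr x 1 * e.repr y 0 := by
  simp [repr_lie hbr, lieCoords]

theorem lie_lie_lie_of_mem (hbr : HasStructureConstants e) (x y z : g) {v : g}
    (hv : v ∈ abelianIdeal e) :
    ⁅x, ⁅y, ⁅z, v⁆⁆⁆ = (e.repr x 0 * e.repr y 0 * e.repr z 0 * e.repr v 2) • e 6 := by
  rw [mem_abelianIdeal] at hv
  refine e.ext_elem fun k => ?_
  fin_cases k <;> simp [repr_lie hbr, lieCoords, hv, mul_assoc]

variable {J : g →ₗ[ℝ] g}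

theorem twistedAd_cube (hbr : HasStructureConstants e) (hJ : ∀ X, J (J X) = -X)
    (hN : NijenhuisVanishes J) (x : g) {c : g}
    (hc : c ∈ abelianIdeal e) (hJc : J c ∈ abelianIdeal e) :
    twistedAd J x (twistedAd J x (twistedAd J x c)) =
      ((⟨e.repr x 0, e.repr (J x) 0⟩ : ℂ) ^ 3 * (⟨e.repr c 2, e.repr (J c) 2⟩ : ℂ)).re • e 6 := by
  have hT : ∀ w, twistedAd J x w = ⁅x, w⁆ - ⁅J x, J w⁆ := fun _ => rfl
  have hJT : ∀ w, J (twistedAd J x w) = ⁅x, J w⁆ + ⁅J x, w⁆ := fun w => by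
    rw [apply_twistedAd hJ hN, hT, hJ, lie_neg, sub_neg_eq_add]
  rw [hT (twistedAd J x (twistedAd J x c)), hJT (twistedAd J x c), hT (twistedAd J x c),
    hJT c, hT c]
  simp only [lie_add, lie_sub, lie_lie_lie_of_mem hbr _ _ _ hc, lie_lie_lie_of_mem hbr _ _ _ hJc,
    pow_succ, pow_zero, one_mul, Complex.mul_re, Complex.mul_im]
  module

theorem repr_two_eq_zero_of_mem (hbr : HasStructureConstants e) (hJ : ∀ X, J (J X) = -X)
    (hN : NijenhuisVanishes J) {c : g} (hc : c ∈ abelianIdeal e) (hJc : J c ∈ abelianIdeal e) :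
    e.repr c 2 = 0 := by
  have hcomm : J (twistedAd J (e 0) (twistedAd J (e 0) (twistedAd J (e 0) c))) =
      twistedAd J (e 0) (twistedAd J (e 0) (twistedAd J (e 0) (J c))) := by
    simp only [apply_twistedAd hJ hN]
  rw [twistedAd_cube hbr hJ hN _ hc hJc,
    twistedAd_cube hbr hJ hN _ hJc (by rw [hJ]; exact neg_mem hc), hJ] at hcomm
  set α : ℂ := ⟨e.repr (e 0) 0, e.repr (J (e 0)) 0⟩
  set γ : ℂ := ⟨e.repr c 2, e.repr (J c) 2⟩
  rw [show (⟨e.repr (J c) 2, e.repr (-c) 2⟩ : ℂ) = -Complex.I * γ by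
      apply Complex.ext <;> simp [γ], mul_left_comm] at hcomm
  have hαγ : α ^ 3 * γ = 0 := by
    rw [← Complex.normSq_eq_zero, Complex.normSq_apply]
    simpa [sq] using sq_add_sq_eq_zero_of_apply_smul_eq hJ (e.ne_zero 6) hcomm
  have hα : α ≠ 0 := fun h => by simpa [α] using congrArg Complex.re h
  simpa [γ] using congrArg Complex.re ((mul_eq_zero.mp hαγ).resolve_left (pow_ne_zero 3 hα))

theorem exists_mem_repr_two_eq_one (hbr : HasStructureConstants e) (hJ : ∀ X, J (J X) = -X)
    (hN : NijenhuisVanishes J) (htop : abelianIdeal e ⊔ (abelianIdeal e).map J = ⊤) :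
    ∃ c ∈ abelianIdeal e, J c ∈ abelianIdeal e ∧ e.repr c 2 = 1 := by
  obtain ⟨ξ, hξ, hJξ⟩ := Submodule.exists_sub_mem_and_apply_mem hJ htop (e 0)
  obtain ⟨η, hη, hJη⟩ := Submodule.exists_sub_mem_and_apply_mem hJ htop (e 1)
  refine ⟨⁅ξ, η⁆, lie_mem_abelianIdeal hbr _ _, ?_, ?_⟩
  · have h := apply_twistedAd hJ hN ξ η
    rw [twistedAd, lie_eq_zero_of_mem hbr hJξ hJη, sub_zero] at h
    rw [h, twistedAd]
    exact sub_mem (lie_mem_abelianIdeal hbr _ _) (lie_mem_abelianIdeal hbr _ _)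
  · rw [mem_abelianIdeal] at hξ hη
    simp only [map_sub, Finsupp.coe_sub, Pi.sub_apply, Basis.repr_self, Finsupp.single_apply,
      sub_eq_zero] at hξ hη
    rw [repr_lie_two hbr]
    norm_num [← hξ.1, ← hξ.2, ← hη.1, ← hη.2]

end Dim8NoComplexStructure

open Dim8NoComplexStructure

/-- the 8-dimensional nilpotent Lie algebra `g = h × ℝ`, with
basis `e 0,…,e 7` (where `e 0,…,e 6` span `h` and `e 7` spans the factor `ℝ`)
and nonzero brackets `[e0,e1]=e2`, `[e0,e2]=e3`, `[e0,e3]=e4`, `[e1,e2]=e5`,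
`[e0,e4]=[e1,e5]=e6`, admits no complex structure. -/
theorem example_dim8_no_complex_structure (g : Type*) [LieRing g]
    [LieAlgebra ℝ g] (e : Module.Basis (Fin 8) ℝ g)
    (hbr : ∀ i j : Fin 8, i < j → ⁅e i, e j⁆ =
      if i = 0 ∧ j = 1 then e 2
      else if i = 0 ∧ j = 2 then e 3
      else if i = 0 ∧ j = 3 then e 4
      else if i = 1 ∧ j = 2 then e 5
      else if i = 0 ∧ j = 4 then e 6
      else if i = 1 ∧ j = 5 then e 6
      else 0) :
    ¬ ∃ J : g →ₗ[ℝ] g, (∀ X : g, J (J X) = -X) ∧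
      (∀ X Y : g, ⁅X, Y⁆ + J ⁅J X, Y⁆ + J ⁅X, J Y⁆ - ⁅J X, J Y⁆ = 0) := by
  rintro ⟨J, hJ, hN⟩
  have : FiniteDimensional ℝ g := e.finiteDimensional_of_finite
  have key {c : g} := repr_two_eq_zero_of_mem (c := c) hbr hJ hN
  rcases Submodule.map_le_or_sup_map_eq_top hJ (finrank_abelianIdeal e) with hle | htop
  · have he2 : e 2 ∈ abelianIdeal e := by simp [mem_abelianIdeal]
    simpa using key he2 (hle ⟨_, he2, rfl⟩)
  · obtain ⟨c, hc, hJc, hc2⟩ := exists_mem_repr_two_eq_one hbr hJ hN htop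
    simp [key hc hJc] at hc2
end

section
/- Let g be the 10-dimensional real nilpotent Lie algebra with basis X₁,...,X₁₀ and nonzero brackets [X₃,X₉] = [X₄,X₁₀] = X₁, [X₅,X₉] = [X₆,X₁₀] = X₂, [X₇,X₉] = X₃, [X₇,X₁₀] = X₄, [X₈,X₉] = X₅, [X₈,X₁₀] = X₆. Then the linear map J defined by JX₁ = -X₇, JX₂ = -X₈, JX₃ = X₄, JX₅ = X₆, JX₉ = X₁₀ (and J² = -Id) is an integrable complex structure on g which is strongly non-nilpotent, i.e., a₁(J) = {0}. -/
/-!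
The Nijenhuis tensor is bilinear, so integrability is a finite check on pairs of basis vectors.
For strong non-nilpotency, bracketing with `X₃, X₄, X₉, X₁₀` shows that the centre is spanned by
`X₁, X₂`. If `X` and `JX` are both central, then `JX` lies in `J(span{X₁, X₂}) = span{X₇, X₈}`,
which meets the centre only in `0`.
-/

open Module

lemma LinearMap.apply_eq_neg_of_apply_eq {R M : Type*} [Semiring R] [AddCommGroup M] [Module R M]
    {J : M →ₗ[R] M} (hJ : ∀ X, J (J X) = -X) {a b : M} (h : J a = b) : J b = -a :=
  h ▸ hJ a

section Nijenhuis

variable {R L : Type*} [CommRing R] [LieRing L] [LieAlgebra R L]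

def nijenhuis (J : L →ₗ[R] L) : L →ₗ[R] L →ₗ[R] L :=
  LinearMap.mk₂ R (fun X Y => ⁅X, Y⁆ + J ⁅J X, Y⁆ + J ⁅X, J Y⁆ - ⁅J X, J Y⁆)
    (fun X X' Y => by simp only [add_lie, map_add]; abel)
    (fun c X Y => by simp only [smul_lie, map_smul, smul_add, smul_sub])
    (fun X Y Y' => by simp only [lie_add, map_add]; abel)
    (fun c X Y => by simp only [lie_smul, map_smul, smul_add, smul_sub])

@[simp]
lemma nijenhuis_apply (J : L →ₗ[R] L) (X Y : L) :
    nijenhuis J X Y = ⁅X, Y⁆ + J ⁅J X, Y⁆ + J ⁅X, J Y⁆ - ⁅J X, J Y⁆ :=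
  rfl

lemma nijenhuis_eq_zero_of_basis {ι : Type*} (e : Basis ι R L) {J : L →ₗ[R] L}
    (h : ∀ i j, nijenhuis J (e i) (e j) = 0) : nijenhuis J = 0 :=
  e.ext fun i => e.ext fun j => h i j

end Nijenhuis

lemma lie_eq_ite_of_lt {L ι : Type*} [LieRing L] [LinearOrder ι] {e : ι → L} {c : ι → ι → L}
    (h : ∀ i j, i < j → ⁅e i, e j⁆ = c i j) (i j : ι) :
    ⁅e i, e j⁆ = if i < j then c i j else if j < i then -c j i else 0 := by
  rcases lt_trichotomy i j with hij | rfl | hji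
  · simp [hij, h i j hij]
  · simp
  · simp [hji, hji.not_gt, ← h j i hji]

lemma Module.Basis.repr_map_apply {R M N ι κ : Type*} [Semiring R] [AddCommGroup M] [Module R M]
    [AddCommGroup N] [Module R N] [Fintype ι] (e : Basis ι R M) (b : Basis κ R N)
    (f : M →ₗ[R] N) (x : M) (k : κ) :
    b.repr (f x) k = ∑ i, e.repr x i * b.repr (f (e i)) k := by
  nth_rw 1 [← e.sum_repr x]
  simp only [map_sum, map_smul, Finsupp.coe_finsetSum, Finset.sum_apply, Finsupp.smul_apply,
    smul_eq_mul]

def dim10Bracket {L : Type*} [Zero L] (e : Fin 10 → L) (i j : Fin 10) : L :=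
  if i = 2 ∧ j = 8 then e 0
  else if i = 3 ∧ j = 9 then e 0
  else if i = 4 ∧ j = 8 then e 1
  else if i = 5 ∧ j = 9 then e 1
  else if i = 6 ∧ j = 8 then e 2
  else if i = 6 ∧ j = 9 then e 3
  else if i = 7 ∧ j = 8 then e 4
  else if i = 7 ∧ j = 9 then e 5
  else 0

def dim10J {L : Type*} [Neg L] (e : Fin 10 → L) : Fin 10 → L :=
  ![-e 6, -e 7, e 3, -e 2, e 5, -e 4, e 0, e 1, e 9, -e 8]

section Dim10

variable {R L : Type*} [CommRing R] [LieRing L] [LieAlgebra R L] {e : Basis (Fin 10) R L}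

lemma dim10_nijenhuis_eq_zero (hbr : ∀ i j, i < j → ⁅e i, e j⁆ = dim10Bracket e i j)
    {J : L →ₗ[R] L} (hJ : ∀ i, J (e i) = dim10J e i) : nijenhuis J = 0 :=
  nijenhuis_eq_zero_of_basis e fun i j => by
    fin_cases i <;> fin_cases j <;> simp [lie_eq_ite_of_lt hbr, hJ, dim10J, dim10Bracket]

lemma dim10_repr_eq_zero_of_central (hbr : ∀ i j, i < j → ⁅e i, e j⁆ = dim10Bracket e i j)
    {X : L} (hX : ∀ Z : L, ⁅X, Z⁆ = 0) (m : Fin 10) (hm : 2 ≤ m) : e.repr X m = 0 := by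
  have coeff (j k : Fin 10) : ∑ i, e.repr X i * e.repr ⁅e j, e i⁆ k = 0 := by
    have := e.repr_map_apply e (LieAlgebra.ad R L (e j)) X k
    simp only [LieAlgebra.ad_apply, ← lie_skew (e j) X, hX, neg_zero, map_zero] at this
    exact this.symm
  have table := lie_eq_ite_of_lt hbr
  -- each coordinate of `X` from `X₃` on is, up to sign, one coordinate of some `⁅e j, X⁆`
  fin_cases m
  · exact absurd hm (by decide)
  · exact absurd hm (by decide)
  · simpa [Fin.sum_univ_succ, table, dim10Bracket] using coeff 8 0
  · simpa [Fin.sum_univ_succ, table, dim10Bracket] using coeff 9 0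
  · simpa [Fin.sum_univ_succ, table, dim10Bracket] using coeff 8 1
  · simpa [Fin.sum_univ_succ, table, dim10Bracket] using coeff 9 1
  · simpa [Fin.sum_univ_succ, table, dim10Bracket] using coeff 8 2
  · simpa [Fin.sum_univ_succ, table, dim10Bracket] using coeff 8 4
  · simpa [Fin.sum_univ_succ, table, dim10Bracket] using coeff 2 0
  · simpa [Fin.sum_univ_succ, table, dim10Bracket] using coeff 3 0

lemma dim10_eq_zero_of_central (hbr : ∀ i j, i < j → ⁅e i, e j⁆ = dim10Bracket e i j)
    {J : L →ₗ[R] L} (hJ : ∀ i, J (e i) = dim10J e i) {X : L}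
    (hX : ∀ Z : L, ⁅X, Z⁆ = 0) (hJX : ∀ Z : L, ⁅J X, Z⁆ = 0) : X = 0 := by
  have hXc := dim10_repr_eq_zero_of_central hbr hX
  have hJXc := dim10_repr_eq_zero_of_central hbr hJX
  have hJX_repr (k : Fin 10) : e.repr (J X) k = ∑ i, e.repr X i * e.repr (dim10J e i) k := by
    simpa only [hJ] using e.repr_map_apply e J X k
  refine e.forall_coord_eq_zero_iff.mp fun m => ?_
  rw [Basis.coord_apply]
  fin_cases m
  · simpa [Fin.sum_univ_succ, dim10J, hJXc 6 (by decide)] using hJX_repr 6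
  · simpa [Fin.sum_univ_succ, dim10J, hJXc 7 (by decide)] using hJX_repr 7
  all_goals exact hXc _ (by decide)

end Dim10

/-- on the 10-dimensional nilpotent Lie algebra with basis
`e 0,…,e 9` (`e i = X_{i+1}`) and nonzero brackets
`[X₃,X₉]=[X₄,X₁₀]=X₁`, `[X₅,X₉]=[X₆,X₁₀]=X₂`, `[X₇,X₉]=X₃`, `[X₇,X₁₀]=X₄`,
`[X₈,X₉]=X₅`, `[X₈,X₁₀]=X₆`, the almost complex structure `J` with
`JX₁=-X₇, JX₂=-X₈, JX₃=X₄, JX₅=X₆, JX₉=X₁₀` and `J²=-Id` is integrable and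
strongly non-nilpotent. -/
theorem example_dim10_snn (g : Type*) [LieRing g] [LieAlgebra ℝ g]
    (e : Module.Basis (Fin 10) ℝ g)
    (hbr : ∀ i j : Fin 10, i < j → ⁅e i, e j⁆ =
      if i = 2 ∧ j = 8 then e 0
      else if i = 3 ∧ j = 9 then e 0
      else if i = 4 ∧ j = 8 then e 1
      else if i = 5 ∧ j = 9 then e 1
      else if i = 6 ∧ j = 8 then e 2
      else if i = 6 ∧ j = 9 then e 3
      else if i = 7 ∧ j = 8 then e 4
      else if i = 7 ∧ j = 9 then e 5
      else 0)
    (J : g →ₗ[ℝ] g) (hJ2 : ∀ X : g, J (J X) = -X)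
    (hJ0 : J (e 0) = -(e 6)) (hJ1 : J (e 1) = -(e 7))
    (hJ2' : J (e 2) = e 3) (hJ4 : J (e 4) = e 5)
    (hJ8 : J (e 8) = e 9) :
    (∀ X Y : g, ⁅X, Y⁆ + J ⁅J X, Y⁆ + J ⁅X, J Y⁆ - ⁅J X, J Y⁆ = 0) ∧
    (∀ X : g, (∀ Z : g, ⁅X, Z⁆ = 0 ∧ ⁅J X, Z⁆ = 0) → X = 0) := by
  have hJ : ∀ i, J (e i) = dim10J e i := by
    have hJ6 : J (e 6) = e 0 := by
      simpa using J.apply_eq_neg_of_apply_eq hJ2 hJ0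
    have hJ7 : J (e 7) = e 1 := by
      simpa using J.apply_eq_neg_of_apply_eq hJ2 hJ1
    intro i
    fin_cases i
    exacts [hJ0, hJ1, hJ2', J.apply_eq_neg_of_apply_eq hJ2 hJ2', hJ4,
      J.apply_eq_neg_of_apply_eq hJ2 hJ4, hJ6, hJ7, hJ8, J.apply_eq_neg_of_apply_eq hJ2 hJ8]
  refine ⟨fun X Y => ?_, fun X hX => dim10_eq_zero_of_central hbr hJ (hX · |>.1) (hX · |>.2)⟩
  simpa using LinearMap.congr_fun₂ (dim10_nijenhuis_eq_zero hbr hJ) X Y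
end
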